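/- Given a collection Q of edge-disjoint paths in a directed graph G equipped with an approximate topological order, there exists a path P ∈ Q with Σ_{e ∈ E(P)} skip(e) ≤ n + 2·(Σ_{e ∈ E(G)} span(e))/|Q|. -/

import Mathlib

/-- The `skip` value of an edge `(x,y)` with respect to an approximate topological
order given by a cluster map `cl` and interval endpoints `a` (first) and `z` (last). -/
def skip {V ι : Type*} [DecidableEq ι] (cl : V → ι) (a z : ι → ℤ) (x y : V) : ℤ :=
  if cl x = cl y then 0
  else if z (cl x) < a (cl y) then a (cl y) - z (cl x)
  else a (cl x) - z (cl y)

/-- The `span` value of an edge `(x,y)` with respect to an approximate topological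
order: nonzero only for right-to-left edges. -/
def spanE {V ι : Type*} [DecidableEq ι] (cl : V → ι) (a z : ι → ℤ) (x y : V) : ℤ :=
  if cl x = cl y then 0
  else if z (cl x) < a (cl y) then 0
  else z (cl x) - a (cl y)

/-! Relative to the right endpoints `z`, a left-to-right edge `x → y` has
`skip ≤ z (cl y) - z (cl x)`, and a right-to-left edge has
`skip ≤ z (cl y) - z (cl x) + 2 · span`. Along a path the potential differences telescope
to at most `n`, so each path has `Σ skip ≤ n + 2 Σ span`. Edge-disjointness makes the path
span totals add up to at most the span total of the whole graph, and the path with the least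
skip total is at most the average. -/

open Finset

namespace List

variable {α : Type*}

theorem IsChain.rel_of_mem_zip_tail {R : α → α → Prop} :
    ∀ {l : List α}, l.IsChain R → ∀ p ∈ l.zip l.tail, R p.1 p.2
  | [], _, _, hp | [_], _, _, hp => by simp at hp
  | x :: y :: l, h, p, hp => by
    rw [tail_cons, zip_cons_cons, mem_cons] at hp
    rcases hp with rfl | hp
    · exact (isChain_cons_cons.mp h).1
    · exact (isChain_cons_cons.mp h).2.rel_of_mem_zip_tail p hp

theorem Nodup.zip_tail : ∀ {l : List α}, l.Nodup → (l.zip l.tail).Nodup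
  | [], _ | [_], _ => by simp
  | x :: y :: l, h => by
    rw [tail_cons, zip_cons_cons, nodup_cons]
    exact ⟨fun hmem => (nodup_cons.mp h).1 (of_mem_zip hmem).1, (nodup_cons.mp h).2.zip_tail⟩

theorem sum_map_zip_tail_sub_cons {G : Type*} [AddCommGroup G] (φ : α → G) :
    ∀ (x : α) (l : List α),
      (((x :: l).zip l).map fun e => φ e.2 - φ e.1).sum
        = φ ((x :: l).getLast (cons_ne_nil x l)) - φ x
  | _, [] => by simp
  | x, y :: l => by
    rw [zip_cons_cons, map_cons, sum_cons, sum_map_zip_tail_sub_cons φ y l,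
      getLast_cons (cons_ne_nil y l)]
    abel

end List

theorem sum_sum_map_le_sum_of_pairwise_disjoint {ι α M : Type*} [Fintype ι] [DecidableEq α]
    [AddCommMonoid M] [PartialOrder M] [IsOrderedAddMonoid M] {E : Finset α} {w : α → M}
    (hw : ∀ e ∈ E, 0 ≤ w e) (L : ι → List α) (hnodup : ∀ i, (L i).Nodup)
    (hsub : ∀ i, ∀ e ∈ L i, e ∈ E) (hdisj : Pairwise fun i j => ∀ e ∈ L i, e ∉ L j) :
    ∑ i, ((L i).map w).sum ≤ ∑ e ∈ E, w e := by
  have hdisj' : ((univ : Finset ι) : Set ι).PairwiseDisjoint fun i => (L i).toFinset :=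
    fun i _ j _ hij => disjoint_left.mpr fun e hi hj =>
      hdisj hij e (List.mem_toFinset.mp hi) (List.mem_toFinset.mp hj)
  calc ∑ i, ((L i).map w).sum = ∑ e ∈ univ.biUnion fun i => (L i).toFinset, w e := by
        rw [sum_biUnion hdisj']
        exact sum_congr rfl fun i _ => (List.sum_toFinset w (hnodup i)).symm
    _ ≤ ∑ e ∈ E, w e := by
        refine sum_le_sum_of_subset_of_nonneg ?_ fun e he _ => hw e he
        intro e he
        obtain ⟨i, -, hi⟩ := mem_biUnion.mp he
        exact hsub i e (List.mem_toFinset.mp hi)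

section SkipSpan

variable {V ι : Type*} [DecidableEq ι] (cl : V → ι) (a z : ι → ℤ)

theorem spanE_nonneg (x y : V) : 0 ≤ spanE cl a z x y := by
  unfold spanE
  split_ifs <;> omega

theorem skip_le_sub_add_two_mul_spanE {x y : V} (hx : a (cl x) ≤ z (cl x))
    (hy : a (cl y) ≤ z (cl y)) :
    skip cl a z x y ≤ z (cl y) - z (cl x) + 2 * spanE cl a z x y := by
  unfold skip spanE
  split_ifs with heq
  · simp [heq]
  · omega
  · omega

theorem sum_skip_le {N : ℤ} (hN : 0 ≤ N) (haz : ∀ i, a i ≤ z i)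
    (hz : ∀ i, 0 ≤ z i ∧ z i ≤ N) (l : List V) :
    ((l.zip l.tail).map fun e => skip cl a z e.1 e.2).sum
      ≤ N + 2 * ((l.zip l.tail).map fun e => spanE cl a z e.1 e.2).sum := by
  rcases l with _ | ⟨x, l⟩
  · simpa using hN
  have hpot := List.sum_map_zip_tail_sub_cons (fun v => z (cl v)) x l
  have hedge : (((x :: l).zip l).map fun e => skip cl a z e.1 e.2).sum
      ≤ (((x :: l).zip l).map fun e => z (cl e.2) - z (cl e.1) + 2 * spanE cl a z e.1 e.2).sum :=
    List.sum_le_sum fun e _ => skip_le_sub_add_two_mul_spanE cl a z (haz _) (haz _)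
  rw [List.sum_map_add, List.sum_map_mul_left, hpot] at hedge
  have := hz (cl ((x :: l).getLast (List.cons_ne_nil x l)))
  have := hz (cl x)
  rw [List.tail_cons]
  omega

end SkipSpan

theorem stmt11_general {V ι : Type*} [DecidableEq ι]
    (E : Finset (V × V)) (cl : V → ι) (a z : ι → ℤ) (n k : ℕ)
    (hk : 0 < k)
    (hiv : ∀ i, 1 ≤ a i ∧ a i ≤ z i ∧ z i ≤ (n : ℤ))
    (Q : Fin k → List V)
    (hchain : ∀ i, (Q i).Chain' (fun u v => (u, v) ∈ E))
    (hsimple : ∀ i, (Q i).Nodup)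
    (hedisj : ∀ i j, i ≠ j → ∀ e ∈ (Q i).zip (Q i).tail, e ∉ (Q j).zip (Q j).tail) :
    ∃ i : Fin k,
      (((((Q i).zip (Q i).tail).map (fun e => skip cl a z e.1 e.2)).sum : ℤ) : ℝ) ≤
        (n : ℝ) + 2 * (∑ e ∈ E, ((spanE cl a z e.1 e.2 : ℤ) : ℝ)) / (k : ℝ) := by
  classical
  set S := ∑ e ∈ E, ((spanE cl a z e.1 e.2 : ℤ) : ℝ)
  have hpath (i : Fin k) := sum_skip_le cl a z (Int.natCast_nonneg n) (fun j => (hiv j).2.1)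
    (fun j => ⟨by linarith [hiv j], (hiv j).2.2⟩) (Q i)
  have hspan : ∑ i, (((Q i).zip (Q i).tail).map fun e => ((spanE cl a z e.1 e.2 : ℤ) : ℝ)).sum
      ≤ S :=
    sum_sum_map_le_sum_of_pairwise_disjoint (fun e _ => by exact_mod_cast spanE_nonneg cl a z _ _)
      _ (fun i => (hsimple i).zip_tail) (fun i => (hchain i).rel_of_mem_zip_tail)
      fun i j hij => hedisj i j hij
  have : NeZero k := ⟨hk.ne'⟩
  obtain ⟨i, -, hi⟩ := exists_le_of_sum_le univ_nonempty <|
    calc ∑ i, ((((Q i).zip (Q i).tail).map fun e => skip cl a z e.1 e.2).sum : ℝ)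
        ≤ ∑ i, ((n : ℝ) + 2 * (((Q i).zip (Q i).tail).map
            fun e => ((spanE cl a z e.1 e.2 : ℤ) : ℝ)).sum) :=
          sum_le_sum fun i _ => by
            simpa [Int.cast_list_sum, List.map_map, Function.comp_def] using
              (Int.cast_le (R := ℝ)).mpr (hpath i)
      _ = k * n + 2 * ∑ i, (((Q i).zip (Q i).tail).map
            fun e => ((spanE cl a z e.1 e.2 : ℤ) : ℝ)).sum := by
          simp [sum_add_distrib, mul_sum]
      _ ≤ k * n + 2 * S := by gcongr
      _ = ∑ _i : Fin k, ((n : ℝ) + 2 * S / k) := by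
          simp only [sum_const, card_univ, Fintype.card_fin, nsmul_eq_mul]
          field_simp
  exact ⟨i, hi⟩

/-- Given a collection `Q` of edge-disjoint simple paths in a directed graph `G`
equipped with an approximate topological order, there exists a path `P ∈ Q` with
`Σ_{e ∈ E(P)} skip(e) ≤ n + 2·(Σ_{e ∈ E(G)} span(e))/|Q|`. -/
theorem stmt11 {V ι : Type*} [Fintype V] [DecidableEq V] [DecidableEq ι]
    (E : Finset (V × V)) (cl : V → ι) (a z : ι → ℤ) (n k : ℕ)
    (hn : n = Fintype.card V) (hk : 0 < k)
    (hiv : ∀ i, 1 ≤ a i ∧ a i ≤ z i ∧ z i ≤ (n : ℤ))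
    (hdisj : ∀ i j, i ≠ j → z i < a j ∨ z j < a i)
    (Q : Fin k → List V)
    (hchain : ∀ i, (Q i).Chain' (fun u v => (u, v) ∈ E))
    (hsimple : ∀ i, (Q i).Nodup)
    (hedisj : ∀ i j, i ≠ j → ∀ e ∈ (Q i).zip (Q i).tail, e ∉ (Q j).zip (Q j).tail) :
    ∃ i : Fin k,
      (((((Q i).zip (Q i).tail).map (fun e => skip cl a z e.1 e.2)).sum : ℤ) : ℝ) ≤
        (n : ℝ) + 2 * (∑ e ∈ E, ((spanE cl a z e.1 e.2 : ℤ) : ℝ)) / (k : ℝ) :=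
  stmt11_general E cl a z n k hk hiv Q hchain hsimple hedisj
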